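/- Let B = {b_1,...,b_n} be a strongly reduced basis of a lattice Λ. If S_i ⊆ {1,...,i−1} is the set of indices j with ‖b_j‖ = λ_j and T_i its complement in {1,...,i−1}, then ‖b_i‖² ≤ ‖b_i*‖² + (1/4)Σ_{j∈S_i}‖b_j*‖² + (1/16)Σ_{j∈T_i}λ_j². -/

import Mathlib

open Finset
open scoped RealInnerProductSpace

noncomputable def latticeOf {n : ℕ} (b : Fin n → EuclideanSpace ℝ (Fin n)) :
    AddSubgroup (EuclideanSpace ℝ (Fin n)) := AddSubgroup.closure (Set.range b)

/-- The `i`-th successive minimum of a lattice `L` (with `i ≥ 1`): the least `r ≥ 0`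
such that the closed ball of radius `r` contains `i` linearly independent lattice vectors. -/
noncomputable def succMin {n : ℕ} (L : AddSubgroup (EuclideanSpace ℝ (Fin n))) (i : ℕ) : ℝ :=
  sInf {r : ℝ | 0 ≤ r ∧ ∃ v : Fin i → EuclideanSpace ℝ (Fin n),
    (∀ j, v j ∈ L) ∧ LinearIndependent ℝ v ∧ ∀ j, ‖v j‖ ≤ r}

/-- A basis `b` of the full-rank lattice it generates is *strongly reduced* if
(1) there are linearly independent lattice vectors `v i` realizing the successive minima whose
integer coordinates over `b` have nonzero `i`-th coordinate and vanish beyond `i`, and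
(2) each `b i` is shortest in its coset modulo the preceding basis vectors. -/
def StronglyReduced {n : ℕ} (b : Fin n → EuclideanSpace ℝ (Fin n)) : Prop :=
  (∃ v : Fin n → EuclideanSpace ℝ (Fin n), ∃ x : Fin n → Fin n → ℤ,
    LinearIndependent ℝ v ∧ (∀ i, v i ∈ latticeOf b) ∧
    (∀ i : Fin n, ‖v i‖ = succMin (latticeOf b) ((i : ℕ) + 1)) ∧
    (∀ i, v i = ∑ j, x i j • b j) ∧
    (∀ i, x i i ≠ 0) ∧ (∀ i j, i < j → x i j = 0)) ∧
  (∀ i : Fin n, ∀ c : Fin n → ℤ,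
    ‖b i‖ ≤ ‖b i + ∑ j ∈ Finset.univ.filter (· < i), c j • b j‖)

/-- The Gram–Schmidt orthogonalization of a family indexed by `Fin n`. -/
noncomputable def gs {n : ℕ} (b : Fin n → EuclideanSpace ℝ (Fin n)) :
    Fin n → EuclideanSpace ℝ (Fin n) :=
  @InnerProductSpace.gramSchmidt ℝ (EuclideanSpace ℝ (Fin n)) _ _ _ (Fin n) _ _
    (inferInstance : WellFoundedLT (Fin n)) b

/-! Size-reduce `b i` modulo `b 0, …, b (i-1)`: the resulting `w` lies in the coset of `b i`, so
`‖b i‖ ≤ ‖w‖`, and its Gram–Schmidt coefficients are `1` at `i`, `0` beyond `i` and at most `1/2`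
in absolute value below `i`; Parseval gives `‖b i‖² ≤ ‖b_i*‖² + (1/4) ∑_{j<i} ‖b_j*‖²`.
For `j ∈ T_i` write `v_j = x_jj b_j + ∑_{l<j} x_jl b_l`. Cauchy–Schwarz against `b_j*` gives
`|x_jj| ‖b_j*‖ ≤ λ_j`, and `|x_jj| = 1` is impossible: `±v_j` would lie in the coset of `b_j`, so
`‖b_j‖ ≤ λ_j`, while `b_j ∉ span (v_l)_{l<j}` gives `λ_j ≤ ‖b_j‖`. Hence `‖b_j*‖ ≤ λ_j / 2`. -/

open InnerProductSpace Module

theorem Finset.sum_eq_add_sum_filter_lt {ι M : Type*} [Fintype ι] [LinearOrder ι]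
    [AddCommMonoid M] (f : ι → M) (i : ι) (hf : ∀ j, i < j → f j = 0) :
    ∑ j, f j = f i + ∑ j ∈ univ.filter (· < i), f j := by
  rw [← sum_filter_not_add_sum_filter univ (· < i), sum_eq_single_of_mem i (by simp)]
  intro j hj hji
  exact hf j (lt_of_le_of_ne (not_lt.1 (mem_filter.1 hj).2) (Ne.symm hji))

theorem Submodule.span_image_Iio_le_of_triangular {ι M : Type*} [Fintype ι] [LinearOrder ι]
    [AddCommGroup M] [Module ℝ M] {b v : ι → M} {x : ι → ι → ℤ}
    (hv : ∀ i, v i = ∑ j, x i j • b j) (hx : ∀ i j, i < j → x i j = 0) (i : ι) :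
    span ℝ (v '' Set.Iio i) ≤ span ℝ (b '' Set.Iio i) := by
  rw [span_le]
  rintro _ ⟨k, hk, rfl⟩
  rw [hv k]
  refine sum_mem fun l _ => ?_
  rcases lt_or_ge k l with hkl | hlk
  · rw [hx k l hkl, zero_smul]
    exact zero_mem _
  · rw [← Int.cast_smul_eq_zsmul ℝ]
    exact smul_mem _ _ (subset_span ⟨l, lt_of_le_of_lt hlk hk, rfl⟩)

section GramSchmidtCoeff

variable {ι E : Type*} [NormedAddCommGroup E] [InnerProductSpace ℝ E]
  [LinearOrder ι] [LocallyFiniteOrderBot ι] [WellFoundedLT ι] (b : ι → E)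

noncomputable def gramSchmidtCoeff (j : ι) : E →L[ℝ] ℝ :=
  (‖gramSchmidt ℝ b j‖ ^ 2)⁻¹ • innerSL ℝ (gramSchmidt ℝ b j)

theorem gramSchmidtCoeff_apply (j : ι) (w : E) :
    gramSchmidtCoeff b j w = ⟪gramSchmidt ℝ b j, w⟫ / ‖gramSchmidt ℝ b j‖ ^ 2 := by
  simp [gramSchmidtCoeff, div_eq_inv_mul]

theorem gramSchmidtCoeff_of_lt {j k : ι} (h : j < k) : gramSchmidtCoeff b k (b j) = 0 := by
  rw [gramSchmidtCoeff_apply, gramSchmidt_inv_triangular ℝ b h, zero_div]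

theorem gramSchmidtCoeff_sum_of_lt (c : ι → ℤ) {s : Finset ι} {k : ι} (hs : ∀ l ∈ s, l < k) :
    gramSchmidtCoeff b k (∑ l ∈ s, c l • b l) = 0 := by
  simp only [map_sum, map_zsmul]
  exact sum_eq_zero fun l hl => by rw [gramSchmidtCoeff_of_lt b (hs l hl), smul_zero]

theorem inner_gramSchmidt_self (j : ι) : ⟪gramSchmidt ℝ b j, b j⟫ = ‖gramSchmidt ℝ b j‖ ^ 2 := by
  conv_lhs => rw [gramSchmidt_def'' ℝ b j]
  rw [inner_add_right, real_inner_self_eq_norm_sq, inner_sum, add_eq_left]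
  refine sum_eq_zero fun l hl => ?_
  rw [real_inner_smul_right, gramSchmidt_orthogonal ℝ b (mem_Iio.1 hl).ne', mul_zero]

theorem gramSchmidtCoeff_self (hb : LinearIndependent ℝ b) (j : ι) :
    gramSchmidtCoeff b j (b j) = 1 := by
  rw [gramSchmidtCoeff_apply, inner_gramSchmidt_self]
  exact div_self (by simpa using gramSchmidt_ne_zero j hb)

theorem abs_gramSchmidtCoeff_mul_norm_le (j : ι) (w : E) :
    |gramSchmidtCoeff b j w| * ‖gramSchmidt ℝ b j‖ ≤ ‖w‖ := by
  rcases eq_or_ne (gramSchmidt ℝ b j) 0 with h | h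
  · simp [h]
  have hpos : 0 < ‖gramSchmidt ℝ b j‖ := norm_pos_iff.2 h
  rw [gramSchmidtCoeff_apply, abs_div, abs_of_pos (pow_pos hpos 2), div_mul_eq_mul_div,
    div_le_iff₀ (pow_pos hpos 2)]
  nlinarith [abs_real_inner_le_norm (gramSchmidt ℝ b j) w]

theorem norm_sq_eq_sum_gramSchmidtCoeff [Fintype ι] [FiniteDimensional ℝ E]
    (hcard : finrank ℝ E = Fintype.card ι) (hb : LinearIndependent ℝ b) (w : E) :
    ‖w‖ ^ 2 = ∑ j, gramSchmidtCoeff b j w ^ 2 * ‖gramSchmidt ℝ b j‖ ^ 2 := by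
  rw [← (gramSchmidtOrthonormalBasis hcard b).sum_sq_norm_inner_right w]
  refine sum_congr rfl fun j _ => ?_
  have hne : gramSchmidtNormed ℝ b j ≠ 0 := by
    simp [← norm_ne_zero_iff, gramSchmidtNormed_unit_length j hb]
  have hpos : 0 < ‖gramSchmidt ℝ b j‖ := norm_pos_iff.2 (gramSchmidt_ne_zero j hb)
  rw [gramSchmidtOrthonormalBasis_apply hcard hne, gramSchmidtNormed, gramSchmidtCoeff_apply,
    Real.norm_eq_abs, sq_abs, real_inner_smul_left, RCLike.ofReal_real_eq_id, id]
  field_simp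

theorem exists_abs_gramSchmidtCoeff_le (hb : LinearIndependent ℝ b) (s : Finset ι) (w : E) :
    ∃ c : ι → ℤ, ∀ j ∈ s, |gramSchmidtCoeff b j (w + ∑ l ∈ s, c l • b l)| ≤ 1 / 2 := by
  classical
  induction s using Finset.induction_on_max generalizing w with
  | empty => exact ⟨0, by simp⟩
  | insert a s hlt ih =>
    set t := round (gramSchmidtCoeff b a w)
    obtain ⟨c, hc⟩ := ih (w - t • b a)
    have has : a ∉ s := fun h => lt_irrefl a (hlt a h)
    refine ⟨Function.update c a (-t), ?_⟩
    have hsum : w + ∑ l ∈ insert a s, Function.update c a (-t) l • b l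
        = w - t • b a + ∑ l ∈ s, c l • b l := by
      rw [sum_insert has, Function.update_self,
        sum_congr rfl fun l hl => by rw [Function.update_of_ne (ne_of_mem_of_not_mem hl has)]]
      rw [neg_smul]
      abel
    intro j hj
    rw [hsum]
    rcases mem_insert.1 hj with rfl | hj
    · rw [map_add, gramSchmidtCoeff_sum_of_lt b c hlt, add_zero, map_sub, map_zsmul,
        gramSchmidtCoeff_self b hb, zsmul_eq_mul, mul_one]
      exact abs_sub_round _
    · exact hc j hj

theorem norm_sq_le_of_forall_norm_le_add_sum [Fintype ι] [FiniteDimensional ℝ E]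
    (hcard : finrank ℝ E = Fintype.card ι) (hb : LinearIndependent ℝ b) (i : ι)
    (hmin : ∀ c : ι → ℤ, ‖b i‖ ≤ ‖b i + ∑ l ∈ univ.filter (· < i), c l • b l‖) :
    ‖b i‖ ^ 2 ≤ ‖gramSchmidt ℝ b i‖ ^ 2 +
      (1 / 4) * ∑ j ∈ univ.filter (· < i), ‖gramSchmidt ℝ b j‖ ^ 2 := by
  obtain ⟨c, hc⟩ := exists_abs_gramSchmidtCoeff_le b hb (univ.filter (· < i)) (b i)
  set w := b i + ∑ l ∈ univ.filter (· < i), c l • b l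
  have hw : ∀ k, i ≤ k → gramSchmidtCoeff b k w = gramSchmidtCoeff b k (b i) := fun k hk => by
    rw [map_add, gramSchmidtCoeff_sum_of_lt b c fun l hl => (mem_filter.1 hl).2.trans_le hk,
      add_zero]
  calc ‖b i‖ ^ 2 ≤ ‖w‖ ^ 2 := pow_le_pow_left₀ (norm_nonneg _) (hmin c) 2
    _ = ∑ j, gramSchmidtCoeff b j w ^ 2 * ‖gramSchmidt ℝ b j‖ ^ 2 :=
      norm_sq_eq_sum_gramSchmidtCoeff b hcard hb w
    _ = ‖gramSchmidt ℝ b i‖ ^ 2 +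
        ∑ j ∈ univ.filter (· < i), gramSchmidtCoeff b j w ^ 2 * ‖gramSchmidt ℝ b j‖ ^ 2 := by
      rw [sum_eq_add_sum_filter_lt _ i fun k hk => by
        rw [hw k hk.le, gramSchmidtCoeff_of_lt b hk]; ring,
        hw i le_rfl, gramSchmidtCoeff_self b hb, one_pow, one_mul]
    _ ≤ ‖gramSchmidt ℝ b i‖ ^ 2 + ∑ j ∈ univ.filter (· < i), 1 / 4 * ‖gramSchmidt ℝ b j‖ ^ 2 := by
      gcongr with j hj
      have := hc j hj
      rw [← sq_abs]
      nlinarith [abs_nonneg (gramSchmidtCoeff b j w)]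
    _ = _ := by rw [mul_sum]

end GramSchmidtCoeff

section SuccessiveMinima

variable {n : ℕ} {L : AddSubgroup (EuclideanSpace ℝ (Fin n))}

theorem succMin_le {m : ℕ} {r : ℝ} (hr : 0 ≤ r) {u : Fin m → EuclideanSpace ℝ (Fin n)}
    (hu : ∀ l, u l ∈ L) (hli : LinearIndependent ℝ u) (hnorm : ∀ l, ‖u l‖ ≤ r) :
    succMin L m ≤ r :=
  csInf_le ⟨0, fun _ h => h.1⟩ ⟨hr, u, hu, hli, hnorm⟩

/-- By induction on `m ≤ j`: adjoining `w` to `v 0, …, v (m-1)` gives `m + 1` independent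
lattice vectors of norm at most `‖w‖`. -/
theorem succMin_le_norm_of_notMem_span {N : ℕ} {v : Fin N → EuclideanSpace ℝ (Fin n)}
    (hvL : ∀ k, v k ∈ L) (hvli : LinearIndependent ℝ v)
    (hvnorm : ∀ k, ‖v k‖ = succMin L (k + 1)) {w : EuclideanSpace ℝ (Fin n)} (hw : w ∈ L)
    {j : Fin N} (hspan : w ∉ Submodule.span ℝ (v '' Set.Iio j)) :
    succMin L (j + 1) ≤ ‖w‖ := by
  suffices ∀ m ≤ (j : ℕ), succMin L (m + 1) ≤ ‖w‖ from this j le_rfl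
  intro m
  induction m using Nat.strong_induction_on with
  | _ m ih =>
  intro hmj
  have hmN : m ≤ N := hmj.trans j.isLt.le
  set u : Fin m → EuclideanSpace ℝ (Fin n) := v ∘ Fin.castLE hmN
  set u' : Fin (m + 1) → EuclideanSpace ℝ (Fin n) := Fin.snoc u w
  have hmem : ∀ l, u' l ∈ L :=
    Fin.lastCases (by simpa [u'] using hw) fun l => by simpa [u', u] using hvL _
  have hnorm : ∀ l, ‖u' l‖ ≤ ‖w‖ :=
    Fin.lastCases (by simp [u']) fun l => by
      simpa [u', u, hvnorm] using ih l l.isLt (l.isLt.trans_le hmj).le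
  have hli : LinearIndependent ℝ u' := by
    rw [linearIndependent_finSnoc]
    refine ⟨hvli.comp _ (Fin.castLE_injective hmN), fun h => hspan (Submodule.span_mono ?_ h)⟩
    rintro _ ⟨l, rfl⟩
    exact ⟨Fin.castLE hmN l, Fin.lt_def.2 (l.isLt.trans_le hmj), rfl⟩
  exact succMin_le (norm_nonneg w) hmem hli hnorm

end SuccessiveMinima

theorem StronglyReduced.two_mul_norm_gs_le_succMin {n : ℕ}
    {b : Fin n → EuclideanSpace ℝ (Fin n)} (hli : LinearIndependent ℝ b)
    (hsr : StronglyReduced b) {j : Fin n} (hne : ‖b j‖ ≠ succMin (latticeOf b) (j + 1)) :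
    2 * ‖gs b j‖ ≤ succMin (latticeOf b) (j + 1) := by
  obtain ⟨⟨v, x, hvli, hvL, hvnorm, hvrep, hxdiag, hxtri⟩, hmin⟩ := hsr
  have hvj : v j = x j j • b j + ∑ l ∈ univ.filter (· < j), x j l • b l :=
    (hvrep j).trans (sum_eq_add_sum_filter_lt _ j fun l hl => by rw [hxtri j l hl, zero_smul])
  have hcoeff : gramSchmidtCoeff b j (v j) = x j j := by
    rw [hvj, map_add, map_zsmul, gramSchmidtCoeff_self b hli,
      gramSchmidtCoeff_sum_of_lt b _ fun l hl => (mem_filter.1 hl).2, add_zero, zsmul_eq_mul,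
      mul_one]
  have hCS := abs_gramSchmidtCoeff_mul_norm_le b j (v j)
  rw [hcoeff, hvnorm j] at hCS
  have hlow : succMin (latticeOf b) (j + 1) ≤ ‖b j‖ :=
    succMin_le_norm_of_notMem_span hvL hvli hvnorm (AddSubgroup.subset_closure ⟨j, rfl⟩)
      fun h => hli.notMem_span_image Set.self_notMem_Iio
        (Submodule.span_image_Iio_le_of_triangular hvrep hxtri j h)
  have hdiag : 2 ≤ |x j j| := by
    by_contra! hlt
    have hunit : |x j j| = 1 := le_antisymm (by omega) (Int.one_le_abs (hxdiag j))
    refine hne (le_antisymm ?_ hlow)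
    calc ‖b j‖ ≤ ‖b j + ∑ l ∈ univ.filter (· < j), (x j j * x j l) • b l‖ := hmin j _
      _ = ‖x j j • v j‖ := by
        rw [hvj, smul_add, smul_smul, ← abs_mul_abs_self, hunit, one_mul, one_smul, smul_sum]
        simp only [smul_smul]
      _ = succMin (latticeOf b) (j + 1) := by
        rw [norm_zsmul ℝ, Int.norm_cast_real, Int.norm_eq_abs, ← Int.cast_abs, hunit,
          Int.cast_one, one_mul, hvnorm]
  calc 2 * ‖gs b j‖ ≤ |(x j j : ℝ)| * ‖gs b j‖ := by
        gcongr
        exact_mod_cast hdiag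
    _ ≤ succMin (latticeOf b) (j + 1) := hCS

theorem stronglyReduced_split_bound {n : ℕ} (b : Fin n → EuclideanSpace ℝ (Fin n))
    (hli : LinearIndependent ℝ b) (hsr : StronglyReduced b) (i : Fin n) :
    ‖b i‖ ^ 2 ≤ ‖gs b i‖ ^ 2 +
      (1 / 4) * ∑ j ∈ Finset.univ.filter (fun j : Fin n =>
          j < i ∧ ‖b j‖ = succMin (latticeOf b) ((j : ℕ) + 1)), ‖gs b j‖ ^ 2 +
      (1 / 16) * ∑ j ∈ Finset.univ.filter (fun j : Fin n =>
          j < i ∧ ‖b j‖ ≠ succMin (latticeOf b) ((j : ℕ) + 1)),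
        succMin (latticeOf b) ((j : ℕ) + 1) ^ 2 := by
  have hcard : finrank ℝ (EuclideanSpace ℝ (Fin n)) = Fintype.card (Fin n) := by simp
  have hT : ∀ j ∈ univ.filter (fun j : Fin n =>
      j < i ∧ ‖b j‖ ≠ succMin (latticeOf b) ((j : ℕ) + 1)),
      1 / 4 * ‖gs b j‖ ^ 2 ≤ 1 / 16 * succMin (latticeOf b) ((j : ℕ) + 1) ^ 2 := fun j hj => by
    have := pow_le_pow_left₀ (by positivity)
      (hsr.two_mul_norm_gs_le_succMin hli (mem_filter.1 hj).2.2) 2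
    linarith
  calc ‖b i‖ ^ 2 ≤ ‖gs b i‖ ^ 2 + 1 / 4 * ∑ j ∈ univ.filter (· < i), ‖gs b j‖ ^ 2 :=
        norm_sq_le_of_forall_norm_le_add_sum b hcard hli i (hsr.2 i)
    _ = ‖gs b i‖ ^ 2 +
        (1 / 4) * ∑ j ∈ univ.filter (fun j : Fin n =>
          j < i ∧ ‖b j‖ = succMin (latticeOf b) ((j : ℕ) + 1)), ‖gs b j‖ ^ 2 +
        (1 / 4) * ∑ j ∈ univ.filter (fun j : Fin n =>
          j < i ∧ ‖b j‖ ≠ succMin (latticeOf b) ((j : ℕ) + 1)), ‖gs b j‖ ^ 2 := by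
      rw [← sum_filter_add_sum_filter_not _ (fun j => ‖b j‖ = succMin (latticeOf b) (j + 1)),
        filter_filter, filter_filter]
      ring
    _ ≤ _ := by
      have := sum_le_sum hT
      rw [← mul_sum, ← mul_sum] at this
      linarith
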